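/- arXiv:2106.11355 — 3 statements merged into one kernel-verified Lean document; each statement's English description precedes it below -/
import Mathlib

section
/- Conversely to the pH parametrization: for any matrices E, J, R ∈ ℝ^(n×n), B, P ∈ ℝ^(n×m), S, N ∈ ℝ^(m×m) satisfying the pH constraints (E ⪰ 0, J = −J^T, N = −N^T, W := [[R,P],[P^T,S]] ⪰ 0), there exists a parameter vector θ ∈ ℝ^(n_θ) with n_θ = n(3n+1)/2 + 2nm + m² such that E = vtu(θ_E)^T vtu(θ_E), J = vtsu(θ_J)^T − vtsu(θ_J), W = vtu(θ_W)^T vtu(θ_W), B = vtf_m(θ_B), and N = vtsu(θ_N)^T − vtsu(θ_N). -/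
open Matrix

/-- Row-wise index into the upper-triangular part. -/
def uidx (n i j : ℕ) : ℕ := i * n - i * (i - 1) / 2 + (j - i)

/-- `vtu` maps a vector of length `n(n+1)/2` row-wise to an `n × n`
upper triangular matrix. -/
def vtu (n : ℕ) (v : Fin (n * (n + 1) / 2) → ℝ) : Matrix (Fin n) (Fin n) ℝ :=
  fun i j => if i ≤ j then
    (if h : uidx n i.val j.val < n * (n + 1) / 2 then v ⟨_, h⟩ else 0) else 0

/-- Row-wise index into the strictly upper-triangular part. -/
def sidx (n i j : ℕ) : ℕ := i * (n - 1) - i * (i - 1) / 2 + (j - i - 1)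

/-- `vtsu` maps a vector of length `n(n-1)/2` row-wise to an `n × n`
strictly upper triangular matrix. -/
def vtsu (n : ℕ) (v : Fin (n * (n - 1) / 2) → ℝ) : Matrix (Fin n) (Fin n) ℝ :=
  fun i j => if i < j then
    (if h : sidx n i.val j.val < n * (n - 1) / 2 then v ⟨_, h⟩ else 0) else 0

/-- `vtf` reshapes a vector of length `n·m` column-wise into an `n × m` matrix. -/
def vtf (n m : ℕ) (v : Fin (n * m) → ℝ) : Matrix (Fin n) (Fin m) ℝ :=
  fun i j => if h : j.val * n + i.val < n * m then v ⟨_, h⟩ else 0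

/-- Top-left `n × n` block of an `(n+m) × (n+m)` matrix. -/
def blk11 (n m : ℕ) (W : Matrix (Fin (n + m)) (Fin (n + m)) ℝ) :
    Matrix (Fin n) (Fin n) ℝ :=
  fun i j => W (Fin.castAdd m i) (Fin.castAdd m j)

/-- Top-right `n × m` block of an `(n+m) × (n+m)` matrix. -/
def blk12 (n m : ℕ) (W : Matrix (Fin (n + m)) (Fin (n + m)) ℝ) :
    Matrix (Fin n) (Fin m) ℝ :=
  fun i j => W (Fin.castAdd m i) (Fin.natAdd n j)

/-- Bottom-right `m × m` block of an `(n+m) × (n+m)` matrix. -/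
def blk22 (n m : ℕ) (W : Matrix (Fin (n + m)) (Fin (n + m)) ℝ) :
    Matrix (Fin m) (Fin m) ℝ :=
  fun i j => W (Fin.natAdd n i) (Fin.natAdd n j)

/-!
A positive semidefinite matrix is the Gram matrix of the columns of a square root; expanding
those columns in the Gram–Schmidt basis they generate gives an upper-triangular `U` with
`A = Uᴴ U` (Cholesky). A skew-symmetric `J` equals `Kᵀ - K` for `K` the strictly upper part
of `-J`. Finally `vtu`, `vtsu` and `vtf` are onto the upper-triangular, strictly
upper-triangular and all matrices, because their index maps are injective on the respective
patterns of entries.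
-/

open scoped ComplexOrder MatrixOrder in
theorem Matrix.PosSemidef.exists_isUpperTriangular_eq_conjTranspose_mul
    {ι 𝕜 : Type*} [Fintype ι] [LinearOrder ι] [LocallyFiniteOrderBot ι]
    [RCLike 𝕜] {A : Matrix ι ι 𝕜} (hA : A.PosSemidef) :
    ∃ U : Matrix ι ι 𝕜, U.IsUpperTriangular ∧ A = Uᴴ * U := by
  obtain ⟨B, rfl⟩ := CStarAlgebra.nonneg_iff_eq_star_mul_self.mp hA.nonneg
  let v : ι → EuclideanSpace 𝕜 ι := fun j => WithLp.toLp 2 fun i => B i j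
  have hgram : star B * B = gram 𝕜 v := by
    ext i j
    simp [v, gram_apply, mul_apply, PiLp.inner_apply, mul_comm]
  let b := InnerProductSpace.gramSchmidtOrthonormalBasis (finrank_euclideanSpace (𝕜 := 𝕜)) v
  exact ⟨of fun i j => b.repr (v j) i,
    fun _ _ hji => InnerProductSpace.gramSchmidtOrthonormalBasis_inv_triangular' _ v hji,
    hgram.trans (gram_eq_conjTranspose_mul b v)⟩

theorem Matrix.exists_eq_transpose_sub_of_transpose_eq_neg {ι R : Type*} [LinearOrder ι]
    [Ring R] [NoZeroDivisors R] [CharZero R] {J : Matrix ι ι R} (hJ : Jᵀ = -J) :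
    ∃ K : Matrix ι ι R, (∀ i j, j ≤ i → K i j = 0) ∧ J = Kᵀ - K := by
  have hskew : ∀ i j, J j i = -J i j := fun i j => congr_fun₂ hJ i j
  refine ⟨of fun i j => if i < j then -J i j else 0,
    fun i j hji => if_neg hji.not_gt, ?_⟩
  ext i j
  rcases lt_trichotomy i j with hij | rfl | hji
  · simp [hij, hij.not_gt]
  · simpa using CharZero.eq_neg_self_iff.mp (hskew i i)
  · simp [hji, hji.not_gt, hskew j i]

/-- The number of entries in the first `i` rows of the upper triangle of an `m × m` matrix:
definitionally `uidx n i j = triRowStart n i + (j - i)` and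
`sidx n i j = triRowStart (n - 1) i + (j - i - 1)`. -/
def triRowStart (m i : ℕ) : ℕ := i * m - i * (i - 1) / 2

theorem triRowStart_succ {m i : ℕ} (hi : i < m) :
    triRowStart m (i + 1) = triRowStart m i + (m - i) := by
  have hle : i * (i - 1) / 2 ≤ i * m :=
    (Nat.div_le_self _ _).trans (Nat.mul_le_mul_left i (by omega))
  have hsucc : (i + 1) * m = i * m + m := Nat.succ_mul i m
  unfold triRowStart
  rw [Nat.triangle_succ]
  omega

theorem triRowStart_mono {m i j : ℕ} (hij : i ≤ j) (hj : j ≤ m) :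
    triRowStart m i ≤ triRowStart m j := by
  induction j, hij using Nat.le_induction with
  | base => exact le_rfl
  | succ j _ ih => rw [triRowStart_succ (by omega)]; exact (ih (by omega)).trans (by omega)

theorem triRowStart_self (m : ℕ) : triRowStart m m = m * (m + 1) / 2 := by
  have heven : m * (m - 1) / 2 * 2 = m * (m - 1) := Nat.div_two_mul_two_of_even
    (Nat.even_mul_pred_self m)
  have hsq : m * m = m * (m - 1) + m := by cases m <;> simp [Nat.mul_succ]
  have htri := Nat.triangle_succ m
  simp only [Nat.add_sub_cancel] at htri
  unfold triRowStart
  rw [Nat.mul_comm m (m + 1), htri]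
  omega

theorem triRowStart_add_lt {m i j d : ℕ} (hij : i < j) (hj : j ≤ m) (hd : d < m - i) :
    triRowStart m i + d < triRowStart m j := by
  have := triRowStart_mono (m := m) (Nat.succ_le_of_lt hij) hj
  rw [triRowStart_succ (by omega)] at this
  omega

theorem triRowStart_add_inj {m i i' d d' : ℕ} (hi : i < m) (hi' : i' < m)
    (hd : d < m - i) (hd' : d' < m - i')
    (h : triRowStart m i + d = triRowStart m i' + d') : i = i' ∧ d = d' := by
  rcases lt_trichotomy i i' with hlt | rfl | hgt
  · have := triRowStart_add_lt hlt hi'.le hd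
    omega
  · omega
  · have := triRowStart_add_lt hgt hi.le hd'
    omega

theorem uidx_lt {n i j : ℕ} (hij : i ≤ j) (hj : j < n) : uidx n i j < n * (n + 1) / 2 :=
  triRowStart_self n ▸ triRowStart_add_lt (m := n) (d := j - i) (by omega) le_rfl (by omega)

theorem uidx_inj {n i j i' j' : ℕ} (hij : i ≤ j) (hj : j < n) (hij' : i' ≤ j') (hj' : j' < n)
    (h : uidx n i j = uidx n i' j') : i = i' ∧ j = j' := by
  have := triRowStart_add_inj (m := n) (by omega) (by omega) (by omega) (by omega) h
  omega

theorem sidx_lt {n i j : ℕ} (hij : i < j) (hj : j < n) : sidx n i j < n * (n - 1) / 2 := by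
  have h := triRowStart_add_lt (m := n - 1) (d := j - i - 1) (i := i) (by omega) le_rfl (by omega)
  rw [triRowStart_self, Nat.sub_add_cancel (by omega), Nat.mul_comm] at h
  exact h

theorem sidx_inj {n i j i' j' : ℕ} (hij : i < j) (hj : j < n) (hij' : i' < j') (hj' : j' < n)
    (h : sidx n i j = sidx n i' j') : i = i' ∧ j = j' := by
  have := triRowStart_add_inj (m := n - 1) (by omega) (by omega) (by omega) (by omega) h
  omega

theorem exists_vtu_eq {n : ℕ} {U : Matrix (Fin n) (Fin n) ℝ} (hU : U.IsUpperTriangular) :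
    ∃ v, vtu n v = U := by
  let idx : {p : Fin n × Fin n // p.1 ≤ p.2} → Fin (n * (n + 1) / 2) :=
    fun p => ⟨uidx n p.1.1 p.1.2, uidx_lt p.2 p.1.2.isLt⟩
  have hidx : idx.Injective := fun p q hpq => by
    obtain ⟨h₁, h₂⟩ := uidx_inj p.2 p.1.2.isLt q.2 q.1.2.isLt (Fin.val_eq_of_eq hpq)
    exact Subtype.ext (Prod.ext (Fin.ext h₁) (Fin.ext h₂))
  refine ⟨Function.extend idx (fun p => U p.1.1 p.1.2) 0, ?_⟩
  ext i j
  by_cases hij : i ≤ j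
  · simpa [vtu, hij, uidx_lt hij j.isLt] using hidx.extend_apply _ 0 ⟨(i, j), hij⟩
  · simp [vtu, hij, hU (not_le.mp hij)]

theorem exists_vtsu_eq {n : ℕ} {K : Matrix (Fin n) (Fin n) ℝ} (hK : ∀ i j, j ≤ i → K i j = 0) :
    ∃ v, vtsu n v = K := by
  let idx : {p : Fin n × Fin n // p.1 < p.2} → Fin (n * (n - 1) / 2) :=
    fun p => ⟨sidx n p.1.1 p.1.2, sidx_lt p.2 p.1.2.isLt⟩
  have hidx : idx.Injective := fun p q hpq => by
    obtain ⟨h₁, h₂⟩ := sidx_inj p.2 p.1.2.isLt q.2 q.1.2.isLt (Fin.val_eq_of_eq hpq)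
    exact Subtype.ext (Prod.ext (Fin.ext h₁) (Fin.ext h₂))
  refine ⟨Function.extend idx (fun p => K p.1.1 p.1.2) 0, ?_⟩
  ext i j
  by_cases hij : i < j
  · simpa [vtsu, hij, sidx_lt hij j.isLt] using hidx.extend_apply _ 0 ⟨(i, j), hij⟩
  · simp [vtsu, hij, hK i j (not_lt.mp hij)]

theorem exists_vtf_eq {n m : ℕ} (B : Matrix (Fin n) (Fin m) ℝ) : ∃ v, vtf n m v = B := by
  let e : Fin m × Fin n ≃ Fin (n * m) := finProdFinEquiv.trans (finCongr (Nat.mul_comm m n))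
  refine ⟨fun k => B (e.symm k).2 (e.symm k).1, ?_⟩
  ext i j
  have hval : (e (j, i) : ℕ) = j * n + i := by
    simp [e, finProdFinEquiv, Nat.add_comm, Nat.mul_comm]
  have hlt : (j : ℕ) * n + i < n * m := hval ▸ (e (j, i)).isLt
  simp only [vtf, dif_pos hlt, show (⟨_, hlt⟩ : Fin (n * m)) = e (j, i) from Fin.ext hval.symm,
    Equiv.symm_apply_apply]

/-- Converse of the pH parametrization: any matrices satisfying the pH
structural constraints arise from some parameter vector
`θ = (θE, θJ, θW, θB, θN)` (of total length `n(3n+1)/2 + 2nm + m²`). -/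
theorem pH_constraints_exists_parameters (n m : ℕ)
    (E J R : Matrix (Fin n) (Fin n) ℝ) (B P : Matrix (Fin n) (Fin m) ℝ)
    (S N : Matrix (Fin m) (Fin m) ℝ)
    (hE : E.PosSemidef) (hJ : Jᵀ = -J) (hN : Nᵀ = -N)
    (hW : (Matrix.fromBlocks R P Pᵀ S).PosSemidef) :
    ∃ (θE : Fin (n * (n + 1) / 2) → ℝ) (θJ : Fin (n * (n - 1) / 2) → ℝ)
      (θW : Fin ((n + m) * ((n + m) + 1) / 2) → ℝ)
      (θB : Fin (n * m) → ℝ) (θN : Fin (m * (m - 1) / 2) → ℝ),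
      E = (vtu n θE)ᵀ * vtu n θE ∧
      J = (vtsu n θJ)ᵀ - vtsu n θJ ∧
      (Matrix.fromBlocks R P Pᵀ S).submatrix finSumFinEquiv.symm finSumFinEquiv.symm
        = (vtu (n + m) θW)ᵀ * vtu (n + m) θW ∧
      B = vtf n m θB ∧
      N = (vtsu m θN)ᵀ - vtsu m θN := by
  simp only [← conjTranspose_eq_transpose_of_trivial (vtu _ _)]
  obtain ⟨UE, hUE, rfl⟩ := hE.exists_isUpperTriangular_eq_conjTranspose_mul
  obtain ⟨θE, rfl⟩ := exists_vtu_eq hUE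
  obtain ⟨UW, hUW, hW_eq⟩ :=
    (hW.submatrix finSumFinEquiv.symm).exists_isUpperTriangular_eq_conjTranspose_mul
  obtain ⟨θW, rfl⟩ := exists_vtu_eq hUW
  obtain ⟨KJ, hKJ, rfl⟩ := exists_eq_transpose_sub_of_transpose_eq_neg hJ
  obtain ⟨θJ, rfl⟩ := exists_vtsu_eq hKJ
  obtain ⟨KN, hKN, rfl⟩ := exists_eq_transpose_sub_of_transpose_eq_neg hN
  obtain ⟨θN, rfl⟩ := exists_vtsu_eq hKN
  obtain ⟨θB, rfl⟩ := exists_vtf_eq B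
  exact ⟨θE, θJ, θW, θB, θN, rfl, rfl, hW_eq, rfl, rfl⟩
end

section
/- Let W = [[R, P], [P^T, S]] be a symmetric block matrix with R ∈ ℝ^(n×n), P ∈ ℝ^(n×m), S ∈ ℝ^(m×m). Then W ⪰ 0 if and only if R ⪰ 0, (I − R R⁺) P = 0, and S − P^T R⁺ P ⪰ 0, where R⁺ is the Moore–Penrose pseudoinverse of R. -/
/-!
If `R * K = P` for some `K`, then `W = L * diag(R, S - Kᴴ * R * K) * Lᴴ` with the invertible
`L = [[1, 0], [Kᴴ, 1]]`, so `W ⪰ 0` iff `R ⪰ 0` and `S - Kᴴ * R * K ⪰ 0`. The range condition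
`(1 - R * R⁺) * P = 0` says exactly that `K = R⁺ * P` works, and then `Kᴴ * R * K = Pᵀ * R⁺ * P`.
Conversely, if `W ⪰ 0` and `R * u = 0`, then `(u, 0)` is a null vector of the quadratic form of
`W`, so `W` kills it and `Pᵀ * u = 0`; as `1 - R * R⁺` maps into `ker R`, this is the range
condition. For symmetric `R` the pseudoinverse exists by the spectral theorem (invert the nonzero
eigenvalues) and is symmetric by uniqueness.
-/

open Matrix Classical

/-- The Moore–Penrose pseudoinverse of a real square matrix, defined via the
four Penrose conditions (which have a unique solution for real matrices). -/

noncomputable def moorePenrose {n : ℕ} (R : Matrix (Fin n) (Fin n) ℝ) :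
    Matrix (Fin n) (Fin n) ℝ :=
  if h : ∃ X : Matrix (Fin n) (Fin n) ℝ,
      R * X * R = R ∧ X * R * X = X ∧ (R * X)ᵀ = R * X ∧ (X * R)ᵀ = X * R then
    h.choose
  else 0

namespace Matrix

variable {m n p α : Type*} [Fintype m] [Fintype n]

structure IsMoorePenroseInverse [NonUnitalNonAssocSemiring α] [Star α]
    (A : Matrix m n α) (X : Matrix n m α) : Prop where
  mul_inv_mul : A * X * A = A
  inv_mul_inv : X * A * X = X
  conjTranspose_mul_inv : (A * X)ᴴ = A * X
  conjTranspose_inv_mul : (X * A)ᴴ = X * A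

namespace IsMoorePenroseInverse

section NonUnitalSemiring

variable [NonUnitalSemiring α] [StarRing α] {A : Matrix m n α} {X Y : Matrix n m α}

theorem conjTranspose (hX : IsMoorePenroseInverse A X) : IsMoorePenroseInverse Aᴴ Xᴴ where
  mul_inv_mul := by
    rw [← conjTranspose_mul, ← conjTranspose_mul, ← Matrix.mul_assoc, hX.mul_inv_mul]
  inv_mul_inv := by
    rw [← conjTranspose_mul, ← conjTranspose_mul, ← Matrix.mul_assoc, hX.inv_mul_inv]
  conjTranspose_mul_inv := by
    rw [← conjTranspose_mul, conjTranspose_conjTranspose, hX.conjTranspose_inv_mul]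
  conjTranspose_inv_mul := by
    rw [← conjTranspose_mul, conjTranspose_conjTranspose, hX.conjTranspose_mul_inv]

theorem unique (hX : IsMoorePenroseInverse A X) (hY : IsMoorePenroseInverse A Y) : X = Y := by
  obtain ⟨hX₁, hX₂, hX₃, hX₄⟩ := hX
  obtain ⟨hY₁, hY₂, hY₃, hY₄⟩ := hY
  have hXY : X = X * A * Y := calc
    X = X * (A * X)ᴴ := by rw [hX₃, ← Matrix.mul_assoc, hX₂]
    _ = X * (A * Y * A * X)ᴴ := by rw [hY₁]
    _ = X * (A * X) * (A * Y) := by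
      rw [Matrix.mul_assoc (A * Y), conjTranspose_mul, hX₃, hY₃, ← Matrix.mul_assoc X]
    _ = X * A * Y := by rw [← Matrix.mul_assoc X A X, hX₂, Matrix.mul_assoc]
  have hYX : Y = X * A * Y := calc
    Y = (Y * A)ᴴ * Y := by rw [hY₄, hY₂]
    _ = (Y * A * (X * A))ᴴ * Y := by rw [Matrix.mul_assoc Y A, ← Matrix.mul_assoc A X A, hX₁]
    _ = X * A * (Y * A) * Y := by rw [conjTranspose_mul, hX₄, hY₄]
    _ = X * A * Y := by rw [Matrix.mul_assoc (X * A) (Y * A), hY₂]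
  exact hXY.trans hYX.symm

theorem isHermitian {A X : Matrix n n α} (hA : A.IsHermitian) (hX : IsMoorePenroseInverse A X) :
    X.IsHermitian :=
  (hA.eq ▸ hX.conjTranspose).unique hX

theorem conjTranspose_inv_mul_mul_inv_mul {A X : Matrix n n α} (hA : A.IsHermitian)
    (hX : IsMoorePenroseInverse A X) (B : Matrix n p α) :
    (X * B)ᴴ * A * (X * B) = Bᴴ * X * B := by
  rw [conjTranspose_mul, (hX.isHermitian hA).eq, Matrix.mul_assoc, Matrix.mul_assoc,
    ← Matrix.mul_assoc A, ← Matrix.mul_assoc X, ← Matrix.mul_assoc X, hX.inv_mul_inv,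
    Matrix.mul_assoc]

theorem map {F : Type*} [FunLike F (Matrix n n α) (Matrix n n α)] [MulHomClass F _ _]
    [StarHomClass F _ _] (φ : F) {A X : Matrix n n α} (hX : IsMoorePenroseInverse A X) :
    IsMoorePenroseInverse (φ A) (φ X) where
  mul_inv_mul := by rw [← map_mul, ← map_mul, hX.mul_inv_mul]
  inv_mul_inv := by rw [← map_mul, ← map_mul, hX.inv_mul_inv]
  conjTranspose_mul_inv := by
    rw [← map_mul, ← star_eq_conjTranspose, ← map_star, star_eq_conjTranspose,
      hX.conjTranspose_mul_inv]
  conjTranspose_inv_mul := by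
    rw [← map_mul, ← star_eq_conjTranspose, ← map_star, star_eq_conjTranspose,
      hX.conjTranspose_inv_mul]

end NonUnitalSemiring

theorem conjTranspose_mul_one_sub_mul_inv [Ring α] [StarRing α] [DecidableEq m]
    {A : Matrix m n α} {X : Matrix n m α} (hX : IsMoorePenroseInverse A X) : Aᴴ * (1 - A * X) = 0 := by
  rw [← hX.conjTranspose_mul_inv, ← conjTranspose_one, ← conjTranspose_sub,
    ← conjTranspose_mul, Matrix.sub_mul, Matrix.one_mul, hX.mul_inv_mul, sub_self,
    conjTranspose_zero]

end IsMoorePenroseInverse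

theorem isMoorePenroseInverse_diagonal {K : Type*} [DivisionRing K] [StarRing K] [DecidableEq n]
    (d : n → K) : IsMoorePenroseInverse (diagonal d) (diagonal d⁻¹) := by
  constructor <;>
  · simp only [diagonal_mul_diagonal, diagonal_conjTranspose, diagonal_eq_diagonal_iff]
    intro i
    rcases eq_or_ne (d i) 0 with h | h <;> simp [h]

theorem IsHermitian.exists_isMoorePenroseInverse {𝕜 : Type*} [RCLike 𝕜] [DecidableEq n]
    {A : Matrix n n 𝕜} (hA : A.IsHermitian) : ∃ X, IsMoorePenroseInverse A X := by
  have hD := isMoorePenroseInverse_diagonal (RCLike.ofReal ∘ hA.eigenvalues : n → 𝕜)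
  have h := IsMoorePenroseInverse.map
    (Unitary.conjStarAlgAut 𝕜 (Matrix n n 𝕜) hA.eigenvectorUnitary) hD
  rw [← hA.spectral_theorem] at h
  exact ⟨_, h⟩

theorem posSemidef_fromBlocks_zero_iff [CommRing α] [PartialOrder α] [StarRing α]
    [IsOrderedAddMonoid α] {A : Matrix m m α} {D : Matrix n n α} :
    (fromBlocks A 0 0 D).PosSemidef ↔ A.PosSemidef ∧ D.PosSemidef := by
  refine ⟨fun h => ⟨h.submatrix Sum.inl, h.submatrix Sum.inr⟩, fun ⟨hA, hD⟩ => ?_⟩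
  refine .of_dotProduct_mulVec_nonneg (hA.isHermitian.fromBlocks (by simp) hD.isHermitian)
    fun x => ?_
  rw [← Sum.elim_comp_inl_inr x, fromBlocks_mulVec, Function.star_sumElim,
    sumElim_dotProduct_sumElim]
  simpa using add_nonneg (hA.dotProduct_mulVec_nonneg _) (hD.dotProduct_mulVec_nonneg _)

theorem fromBlocks_eq_mul_fromBlocks_zero_mul [Ring α] [StarRing α] [DecidableEq m]
    [DecidableEq n] {A : Matrix m m α} {B K : Matrix m n α} (D : Matrix n n α)
    (hA : A.IsHermitian) (hK : A * K = B) :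
    fromBlocks A B Bᴴ D =
      fromBlocks 1 0 Kᴴ 1 * fromBlocks A 0 0 (D - Kᴴ * A * K) * (fromBlocks 1 0 Kᴴ 1)ᴴ := by
  have hKA : Kᴴ * A = Bᴴ := by rw [← hK, conjTranspose_mul, hA.eq]
  simp [fromBlocks_multiply, fromBlocks_conjTranspose, hK, hKA]

theorem posSemidef_fromBlocks_iff_of_mul_eq [CommRing α] [PartialOrder α] [StarRing α]
    [IsOrderedAddMonoid α] [DecidableEq m] [DecidableEq n] {A : Matrix m m α}
    {B K : Matrix m n α} (D : Matrix n n α) (hA : A.IsHermitian) (hK : A * K = B) :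
    (fromBlocks A B Bᴴ D).PosSemidef ↔ A.PosSemidef ∧ (D - Kᴴ * A * K).PosSemidef := by
  have hL : IsUnit (fromBlocks 1 0 Kᴴ 1 : Matrix (m ⊕ n) (m ⊕ n) α) := by simp
  rw [fromBlocks_eq_mul_fromBlocks_zero_mul D hA hK, ← star_eq_conjTranspose,
    hL.posSemidef_star_right_conjugate_iff, posSemidef_fromBlocks_zero_iff]

section RCLike

open scoped ComplexOrder

variable {𝕜 : Type*} [RCLike 𝕜] {A : Matrix m m 𝕜} {B : Matrix m n 𝕜} {D : Matrix n n 𝕜}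

theorem PosSemidef.conjTranspose_mul_eq_zero_of_fromBlocks [Fintype p] {N : Matrix m p 𝕜}
    (hW : (fromBlocks A B Bᴴ D).PosSemidef) (hN : A * N = 0) : Bᴴ * N = 0 := by
  refine ext_iff_mulVec.mpr fun v => funext fun i => ?_
  have hWx := (hW.dotProduct_mulVec_zero_iff (Sum.elim (N *ᵥ v) 0)).mp (by
    simp [fromBlocks_mulVec, Function.star_sumElim, mulVec_mulVec, hN])
  simpa [fromBlocks_mulVec, mulVec_mulVec] using congrFun hWx (Sum.inr i)

theorem PosSemidef.one_sub_mul_mul_eq_zero_of_fromBlocks [DecidableEq m] {X : Matrix m m 𝕜}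
    (hW : (fromBlocks A B Bᴴ D).PosSemidef) (hX : IsMoorePenroseInverse A X) :
    (1 - A * X) * B = 0 := by
  have hA : A.IsHermitian := (hW.submatrix Sum.inl).isHermitian
  have hBN :=
    hW.conjTranspose_mul_eq_zero_of_fromBlocks (hA.eq ▸ hX.conjTranspose_mul_one_sub_mul_inv)
  have hN : (1 - A * X)ᴴ = 1 - A * X := by
    rw [conjTranspose_sub, conjTranspose_one, hX.conjTranspose_mul_inv]
  rw [← conjTranspose_conjTranspose ((1 - A * X) * B), conjTranspose_mul, hN, hBN,
    conjTranspose_zero]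

end RCLike

end Matrix

theorem isMoorePenroseInverse_moorePenrose {n : ℕ} {R : Matrix (Fin n) (Fin n) ℝ}
    (hR : R.IsHermitian) : IsMoorePenroseInverse R (moorePenrose R) := by
  obtain ⟨X, h₁, h₂, h₃, h₄⟩ := hR.exists_isMoorePenroseInverse
  rw [conjTranspose_eq_transpose_of_trivial] at h₃ h₄
  have h : ∃ X : Matrix (Fin n) (Fin n) ℝ,
      R * X * R = R ∧ X * R * X = X ∧ (R * X)ᵀ = R * X ∧ (X * R)ᵀ = X * R :=
    ⟨X, h₁, h₂, h₃, h₄⟩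
  rw [moorePenrose, dif_pos h]
  obtain ⟨h₁, h₂, h₃, h₄⟩ := h.choose_spec
  rw [← conjTranspose_eq_transpose_of_trivial] at h₃ h₄
  exact ⟨h₁, h₂, h₃, h₄⟩

theorem posSemidef_blockMatrix_iff_schur_general (n m : ℕ)
    (R : Matrix (Fin n) (Fin n) ℝ) (P : Matrix (Fin n) (Fin m) ℝ)
    (S : Matrix (Fin m) (Fin m) ℝ) :
    (Matrix.fromBlocks R P Pᵀ S).PosSemidef ↔
      R.PosSemidef ∧ (1 - R * moorePenrose R) * P = 0 ∧
        (S - Pᵀ * moorePenrose R * P).PosSemidef := by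
  rw [← conjTranspose_eq_transpose_of_trivial]
  have hschur (hR : R.IsHermitian) (hrange : (1 - R * moorePenrose R) * P = 0) :
      (fromBlocks R P Pᴴ S).PosSemidef ↔
        R.PosSemidef ∧ (S - Pᴴ * moorePenrose R * P).PosSemidef := by
    have hX := isMoorePenroseInverse_moorePenrose hR
    have hRXP : R * (moorePenrose R * P) = P := by
      rwa [Matrix.sub_mul, Matrix.one_mul, sub_eq_zero, Matrix.mul_assoc, eq_comm] at hrange
    rw [posSemidef_fromBlocks_iff_of_mul_eq S hR hRXP, hX.conjTranspose_inv_mul_mul_inv_mul hR]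
  constructor
  · intro hW
    have hR : R.PosSemidef := hW.submatrix Sum.inl
    have hX := isMoorePenroseInverse_moorePenrose hR.isHermitian
    have hrange := hW.one_sub_mul_mul_eq_zero_of_fromBlocks hX
    exact ⟨hR, hrange, ((hschur hR.isHermitian hrange).mp hW).2⟩
  · rintro ⟨hR, hrange, hS⟩
    exact (hschur hR.isHermitian hrange).mpr ⟨hR, hS⟩

/-- Generalized Schur complement characterization: for a symmetric block matrix
`W = [[R, P], [Pᵀ, S]]`, we have `W ⪰ 0` iff `R ⪰ 0`, `(I − R R⁺) P = 0`, and
`S − Pᵀ R⁺ P ⪰ 0`. -/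
theorem posSemidef_blockMatrix_iff_schur (n m : ℕ)
    (R : Matrix (Fin n) (Fin n) ℝ) (P : Matrix (Fin n) (Fin m) ℝ)
    (S : Matrix (Fin m) (Fin m) ℝ) (hR : Rᵀ = R) (hS : Sᵀ = S) :
    (Matrix.fromBlocks R P Pᵀ S).PosSemidef ↔
      R.PosSemidef ∧ (1 - R * moorePenrose R) * P = 0 ∧
        (S - Pᵀ * moorePenrose R * P).PosSemidef :=
  posSemidef_blockMatrix_iff_schur_general n m R P S
end

section
/- Let H_pH(s, θ) = (B+P)^T (sE − (J−R))^{-1} (B−P) + (S+N) be the transfer function of a pH system with matrices depending on parameters as in the parametrization. For a purely imaginary s = iω (ω ∈ ℝ) at which D(s) := sE − (J−R) is invertible, the matrix Φ(s) := H_pH(−s)^T + H_pH(s) satisfies z^H Φ(iω) z ≥ 0 for all z ∈ ℂ^m, i.e., Φ is positive semidefinite on the imaginary axis wherever defined. -/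
open Matrix Complex
open scoped ComplexOrder

/-- The transfer function `H(s) = (B+P)ᵀ (sE − J + R)⁻¹ (B−P) + S + N` of a pH
system, viewed as a complex matrix. -/
noncomputable def pHTransfer (n m : ℕ) (E J R : Matrix (Fin n) (Fin n) ℝ)
    (B P : Matrix (Fin n) (Fin m) ℝ) (S N : Matrix (Fin m) (Fin m) ℝ) (s : ℂ) :
    Matrix (Fin m) (Fin m) ℂ :=
  ((B + P)ᵀ).map (Complex.ofReal) *
      (s • E.map (Complex.ofReal) -
        (J.map (Complex.ofReal) - R.map (Complex.ofReal)))⁻¹ *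
    ((B - P).map (Complex.ofReal)) + (S + N).map (Complex.ofReal)

/-!
Since the data are real, transposing `H` at `-iω = conj (iω)` conjugate-transposes it at `iω`,
so `Φ(iω) = H(iω)ᴴ + H(iω)`. Put `D = iωE − (J − R)` and `K = D⁻¹(B − P)`, so that `B − P = D K`,
and note `Dᴴ + D = 2R` because `iωE − J` is skew-Hermitian. Expanding `H = (DK + 2P)ᴴ K + S + N`
then gives the congruence `Φ(iω) = 2 Tᴴ W T` with `T = [K; I]`, which is positive semidefinite
because `W` is.
-/

namespace Matrix

variable {ι κ : Type*}

theorem conjTranspose_map_ofReal (A : Matrix ι κ ℝ) : (A.map ofReal)ᴴ = Aᵀ.map ofReal := by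
  ext i j
  simp [conjTranspose_apply]

theorem conjTranspose_map_ofReal_of_transpose_eq_neg {A : Matrix ι ι ℝ} (hA : Aᵀ = -A) :
    (A.map ofReal)ᴴ = -A.map ofReal := by
  rw [conjTranspose_map_ofReal, hA, Matrix.map_neg _ ofReal_neg]

theorem IsHermitian.map_ofReal {A : Matrix ι ι ℝ} (hA : A.IsHermitian) :
    (A.map ofReal).IsHermitian :=
  hA.map _ fun r ↦ (conj_ofReal r).symm

theorem PosSemidef.map_ofReal [Fintype ι] [DecidableEq ι] {A : Matrix ι ι ℝ}
    (hA : A.PosSemidef) : (A.map ofReal).PosSemidef := by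
  obtain ⟨C, rfl⟩ : ∃ C : Matrix ι ι ℝ, A = Cᴴ * C := by
    open scoped MatrixOrder in exact CStarAlgebra.nonneg_iff_eq_star_mul_self.mp hA.nonneg
  have hmap : (Cᴴ * C).map ofReal = (C.map ofReal)ᴴ * C.map ofReal := by
    ext i j
    simp [mul_apply, conjTranspose_apply]
  rw [hmap]
  exact posSemidef_conjTranspose_mul_self _

theorem conjTranspose_add_self_of_skew {α : Type*} [AddCommGroup α] [StarAddMonoid α]
    {A B : Matrix ι ι α} (hA : Aᴴ = A) (hB : Bᴴ = -B) : (A + B)ᴴ + (A + B) = 2 • A := by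
  rw [conjTranspose_add, hA, hB, two_nsmul]
  abel

theorem conjTranspose_add_self_eq_two_smul_conjTranspose_mul_fromBlocks_mul
    [Fintype ι] [Fintype κ] [DecidableEq κ] {α : Type*} [CommRing α] [StarRing α]
    {D R : Matrix ι ι α} {K F P : Matrix ι κ α} {M S : Matrix κ κ α}
    (hK : D * K = F) (hD : Dᴴ + D = 2 • R) (hM : Mᴴ + M = 2 • S) :
    ((F + 2 • P)ᴴ * K + M)ᴴ + ((F + 2 • P)ᴴ * K + M) =
      2 • ((fromRows K (1 : Matrix κ κ α))ᴴ * fromBlocks R P Pᴴ S *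
        fromRows K (1 : Matrix κ κ α)) := by
  subst hK
  calc ((D * K + 2 • P)ᴴ * K + M)ᴴ + ((D * K + 2 • P)ᴴ * K + M)
      = Kᴴ * (Dᴴ + D) * K + 2 • (Kᴴ * P + Pᴴ * K) + (Mᴴ + M) := by
        simp only [conjTranspose_add, conjTranspose_mul, conjTranspose_nsmul,
          conjTranspose_conjTranspose, Matrix.add_mul, Matrix.mul_add, Matrix.smul_mul,
          Matrix.mul_assoc, smul_add]
        abel
    _ = 2 • ((fromRows K (1 : Matrix κ κ α))ᴴ * fromBlocks R P Pᴴ S *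
          fromRows K (1 : Matrix κ κ α)) := by
        rw [hD, hM, conjTranspose_fromRows_eq_fromCols_conjTranspose, fromCols_mul_fromBlocks,
          fromCols_mul_fromRows]
        simp only [conjTranspose_one, Matrix.one_mul, Matrix.mul_one, Matrix.add_mul,
          Matrix.mul_assoc, Matrix.smul_mul, Matrix.mul_smul, smul_add]
        abel

end Matrix

section PortHamiltonian

variable {n m : ℕ}

theorem pencil_conjTranspose_add_self {E J R : Matrix (Fin n) (Fin n) ℝ} {s : ℂ}
    (hs : star s = -s) (hE : E.IsHermitian) (hJ : Jᵀ = -J) (hR : R.IsHermitian) :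
    (s • E.map ofReal - (J.map ofReal - R.map ofReal))ᴴ +
        (s • E.map ofReal - (J.map ofReal - R.map ofReal)) = 2 • R.map ofReal := by
  rw [show s • E.map ofReal - (J.map ofReal - R.map ofReal) =
      R.map ofReal + (s • E.map ofReal - J.map ofReal) by abel]
  refine conjTranspose_add_self_of_skew hR.map_ofReal ?_
  rw [conjTranspose_sub, conjTranspose_smul, hs, hE.map_ofReal.eq,
    conjTranspose_map_ofReal_of_transpose_eq_neg hJ, neg_smul]
  abel

theorem pHTransfer_star_transpose (E J R : Matrix (Fin n) (Fin n) ℝ)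
    (B P : Matrix (Fin n) (Fin m) ℝ) (S N : Matrix (Fin m) (Fin m) ℝ) (s : ℂ) :
    (pHTransfer n m E J R B P S N (star s))ᵀ = (pHTransfer n m E J R B P S N s)ᴴ := by
  simp [pHTransfer, transpose_nonsing_inv, conjTranspose_nonsing_inv, conjTranspose_map_ofReal,
    ← transpose_map]

theorem pHTransfer_eq_conjTranspose_mul_inv_mul_add (E J R : Matrix (Fin n) (Fin n) ℝ)
    (B P : Matrix (Fin n) (Fin m) ℝ) (S N : Matrix (Fin m) (Fin m) ℝ) (s : ℂ) :
    pHTransfer n m E J R B P S N s =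
      ((B - P).map ofReal + 2 • P.map ofReal)ᴴ *
          ((s • E.map ofReal - (J.map ofReal - R.map ofReal))⁻¹ * (B - P).map ofReal) +
        (S + N).map ofReal := by
  rw [pHTransfer, Matrix.mul_assoc]
  congr 2
  ext i j
  simp only [transpose_add, map_apply, Matrix.add_apply, transpose_apply, ofReal_add,
    conjTranspose_apply, Matrix.sub_apply, ofReal_sub, Matrix.smul_apply, nsmul_eq_mul,
    Nat.cast_ofNat, star_add, star_sub, RCLike.star_def, conj_ofReal, star_mul', star_ofNat]
  ring

end PortHamiltonian

/-- Positive realness of the pH transfer function on the imaginary axis: for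
`s = iω` at which `D(s) = sE − (J−R)` is invertible,
`Φ(s) = H(−s)ᵀ + H(s)` satisfies `zᴴ Φ(iω) z ≥ 0` for all `z ∈ ℂᵐ`. -/
theorem pH_transfer_positive_real (n m : ℕ)
    (E J R : Matrix (Fin n) (Fin n) ℝ) (B P : Matrix (Fin n) (Fin m) ℝ)
    (S N : Matrix (Fin m) (Fin m) ℝ)
    (hE : E.PosSemidef) (hJ : Jᵀ = -J) (hN : Nᵀ = -N)
    (hW : (Matrix.fromBlocks R P Pᵀ S).PosSemidef)
    (ω : ℝ)
    (hD : IsUnit ((Complex.I * (ω : ℂ)) • E.map (Complex.ofReal) -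
      (J.map (Complex.ofReal) - R.map (Complex.ofReal))).det) :
    ∀ z : Fin m → ℂ,
      0 ≤ star z ⬝ᵥ
        (((pHTransfer n m E J R B P S N (-(Complex.I * (ω : ℂ))))ᵀ +
          pHTransfer n m E J R B P S N (Complex.I * (ω : ℂ))).mulVec z) := by
  intro z
  obtain ⟨hR, -, -, hS⟩ := isHermitian_fromBlocks_iff.mp hW.isHermitian
  have hs : star (I * ω) = -(I * ω) := by simp
  have hfeed : ((S + N).map ofReal)ᴴ + (S + N).map ofReal = 2 • S.map ofReal := by
    rw [Matrix.map_add _ ofReal_add]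
    exact conjTranspose_add_self_of_skew hS.map_ofReal
      (conjTranspose_map_ofReal_of_transpose_eq_neg hN)
  have hW' :
      (fromBlocks (R.map ofReal) (P.map ofReal) (P.map ofReal)ᴴ (S.map ofReal)).PosSemidef := by
    simpa only [fromBlocks_map, conjTranspose_map_ofReal] using hW.map_ofReal
  rw [← hs, pHTransfer_star_transpose, pHTransfer_eq_conjTranspose_mul_inv_mul_add,
    conjTranspose_add_self_eq_two_smul_conjTranspose_mul_fromBlocks_mul
      (mul_nonsing_inv_cancel_left _ _ hD)
      (pencil_conjTranspose_add_self hs hE.isHermitian hJ hR) hfeed]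
  exact ((hW'.conjTranspose_mul_mul_same _).smul zero_le_two).dotProduct_mulVec_nonneg z
end
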